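/- arXiv:1807.02273 — 2 statements merged into one kernel-verified Lean document; each statement's English description precedes it below -/
import Mathlib

section
/- Proposition 8 (iterated residue evaluation). Let M, N be positive integers, q ∈ ℂ with 0 < |q| < 1, and w₀ ∈ ℂ, w₀ ≠ 0. Let f : ℂ^{M+N+1} → ℂ be an entire function. Let r₁, …, r_{M+N−1} be positive real numbers with |w₀| < |q| r₁, r_j < |q| r_{j+1} for 1 ≤ j ≤ M−1, and |q| r_j < r_{j+1} for M ≤ j ≤ M+N−2, and let w_{M+N} ∈ ℂ with |w_{M+N}| > |q| r_{M+N−1}. Then the iterated contour integral ∮_{|w₁|=r₁} (dw₁/2πi) ⋯ ∮_{|w_{M+N−1}|=r_{M+N−1}} (dw_{M+N−1}/2πi) of f(w₀, w₁, …, w_{M+N}) / [ Π_{j=0}^{M−1} (w_{j+1} − q^{−1} w_j) · Π_{j=M}^{M+N−1} (w_{j+1} − q w_j) ] equals f(w₀, q^{−1}w₀, q^{−2}w₀, …, q^{−M}w₀, q^{−M+1}w₀, q^{−M+2}w₀, …, q^{−M+N−1}w₀, w_{M+N}) / (w_{M+N} − q^{N−M} w₀); that is, the j-th interior argument is q^{−j}w₀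 for 1 ≤ j ≤ M and q^{−2M+j}w₀ for M+1 ≤ j ≤ M+N−1. In particular, multiplying the integrand by (w_{M+N} − q^{N−M}w₀), the result tends to f(w₀, q^{−1}w₀, …, q^{−M}w₀, q^{−M+1}w₀, …, q^{−M+N−1}w₀, q^{−M+N}w₀) as w_{M+N} → q^{N−M}w₀. -/
/-!
Integrate out the variables from the innermost, `w_{M+N-1}`, outwards. At each stage the
integrand in the current variable `z` has exactly two poles: `z = c·w_prev` inside the circle
(with `c = q⁻¹` or `q`) and the zero of the accumulated factor `w_{M+N} - C·z` outside it, so the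
Cauchy integral formula replaces `z` by `c·w_prev`. This multiplies `C` by `c` and moves all later
variables along the chain `u_{l+1} = c_l u_l`; the radius conditions say precisely that the two
poles stay on the correct sides of every circle.
-/

/-- Iterated normalized contour integral: `iterCI r F i k w` integrates `F` over the
variables of indices `i, i+1, …, i+k−1`, the variable of index `j` running over the
counterclockwise circle of radius `r j` centered at the origin, each integral carrying
the normalization `1/(2πi)`. -/
noncomputable def iterCI (r : ℕ → ℝ) (F : (ℕ → ℂ) → ℂ) : ℕ → ℕ → (ℕ → ℂ) → ℂ
  | _, 0, w => F w
  | i, k + 1, w =>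
      (2 * Real.pi * Complex.I)⁻¹ *
        ∮ z in C(0, r i), iterCI r F (i + 1) k (Function.update w i z)

open Finset Function Metric

lemma circleIntegral_div_sub_mul_sub {g : ℂ → ℂ} (hg : Differentiable ℂ g) {R : ℝ} {b c d : ℂ}
    (hb : ‖b‖ < R) (hcd : ‖c‖ * R < ‖d‖) :
    (2 * Real.pi * Complex.I)⁻¹ * ∮ z in C(0, R), g z / ((z - b) * (d - c * z)) =
      g b / (d - c * b) := by
  have hden : ∀ z ∈ closedBall (0 : ℂ) R, d - c * z ≠ 0 := by
    intro z hz
    rw [sub_ne_zero]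
    rintro rfl
    have : ‖c * z‖ ≤ ‖c‖ * R := by
      rw [norm_mul]
      exact mul_le_mul_of_nonneg_left (mem_closedBall_zero_iff.mp hz) (norm_nonneg c)
    exact (this.trans_lt hcd).false
  have hdiff : DifferentiableOn ℂ (fun z => g z / (d - c * z)) (closedBall 0 R) :=
    hg.differentiableOn.div (by fun_prop) hden
  have hcauchy := hdiff.circleIntegral_sub_inv_smul (mem_ball_zero_iff.mpr hb)
  have hintegrand : (fun z => g z / ((z - b) * (d - c * z))) =
      fun z => (z - b)⁻¹ • (g z / (d - c * z)) := by
    funext z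
    rw [smul_eq_mul, mul_comm (z - b), ← div_div, div_eq_inv_mul]
  rw [hintegrand, hcauchy, smul_eq_mul, ← mul_assoc, inv_mul_cancel₀ Complex.two_pi_I_ne_zero,
    one_mul]

/-- The point at which the integrand is evaluated once the variables `m + 1, …, n - 1` have been
integrated out. -/
def chainPoint (c : ℕ → ℂ) (n m : ℕ) (w : ℕ → ℂ) (l : ℕ) : ℂ :=
  if l ≤ m ∨ l = n then w l else (∏ j ∈ Ico m l, c j) * w m

lemma chainPoint_update_succ (c : ℕ → ℂ) {n m : ℕ} (w : ℕ → ℂ) (hmn : m + 1 < n) :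
    chainPoint c n (m + 1) (update w (m + 1) (c m * w m)) = chainPoint c n m w := by
  funext l
  simp only [chainPoint, update_apply]
  by_cases hl : l ≤ m
  · simp [hl, show l ≤ m + 1 by omega, show l ≠ m + 1 by omega]
  by_cases hlm : l = m + 1
  · subst hlm
    simp [hmn.ne]
  by_cases hln : l = n
  · simp [hln, hmn.ne']
  simp only [show ¬ l ≤ m + 1 by omega, hl, hln, or_false, if_false, if_true,
    prod_eq_prod_Ico_succ_bot (show m < l by omega)]
  ring

lemma differentiable_chainPoint_update (c : ℕ → ℂ) (n m : ℕ) (w : ℕ → ℂ) (l : ℕ) :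
    Differentiable ℂ fun z => chainPoint c n m (update w m z) l := by
  unfold chainPoint
  by_cases hl : l ≤ m ∨ l = n
  · simp only [hl, if_true, update_apply]
    by_cases hlm : l = m <;> simp only [hlm, if_true, if_false] <;> fun_prop
  · simp only [hl, if_false, update_self]
    fun_prop

section chain

variable {n : ℕ}

noncomputable def chainIntegrand (c : ℕ → ℂ) (f : (Fin (n + 1) → ℂ) → ℂ) (u : ℕ → ℂ) : ℂ :=
  f (fun i => u i) / ∏ j ∈ range n, (u (j + 1) - c j * u j)

lemma norm_prod_Ico_mul_lt {c : ℕ → ℂ} {r : ℕ → ℝ} {m : ℕ} {d : ℝ}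
    (hin : ∀ l, m < l → l + 1 < n → ‖c l‖ * r l < r (l + 1))
    (hlast : ‖c (n - 1)‖ * r (n - 1) < d) :
    ∀ l, m < l → l < n → ‖∏ j ∈ Ico l n, c j‖ * r l < d := by
  suffices ∀ k l, l + 1 + k = n → m < l → ‖∏ j ∈ Ico l n, c j‖ * r l < d from
    fun l hml hln => this (n - l - 1) l (by omega) hml
  intro k
  induction k with
  | zero =>
    intro l hln _
    obtain rfl : n = l + 1 := hln.symm
    simpa using hlast
  | succ k ih =>
    intro l hln hml
    rw [prod_eq_prod_Ico_succ_bot (by omega), norm_mul, mul_comm (‖c l‖), mul_assoc]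
    calc ‖∏ j ∈ Ico (l + 1) n, c j‖ * (‖c l‖ * r l)
        ≤ ‖∏ j ∈ Ico (l + 1) n, c j‖ * r (l + 1) :=
          mul_le_mul_of_nonneg_left (hin l hml (by omega)).le (norm_nonneg _)
      _ < d := ih (l + 1) (by omega) (by omega)

theorem iterCI_chainIntegrand {c : ℕ → ℂ} {f : (Fin (n + 1) → ℂ) → ℂ}
    (hf : Differentiable ℂ f) {r : ℕ → ℝ} (k m : ℕ) (w : ℕ → ℂ) (hmn : m + 1 + k = n)
    (hfirst : 0 < k → ‖c m‖ * ‖w m‖ < r (m + 1))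
    (hin : ∀ l, m < l → l + 1 < n → ‖c l‖ * r l < r (l + 1))
    (hout : ∀ l, m < l → l < n → ‖∏ j ∈ Ico l n, c j‖ * r l < ‖w n‖) :
    iterCI r (chainIntegrand c f) (m + 1) k w =
      f (fun l => chainPoint c n m w l) /
        ((∏ j ∈ range m, (w (j + 1) - c j * w j)) * (w n - (∏ j ∈ Ico m n, c j) * w m)) := by
  induction k generalizing m w with
  | zero =>
    obtain rfl : n = m + 1 := hmn.symm
    have hpoint : (fun l : Fin (m + 1 + 1) => chainPoint c (m + 1) m w l) =
        fun l : Fin (m + 1 + 1) => w l := by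
      funext l
      simp [chainPoint, show (l : ℕ) ≤ m ∨ (l : ℕ) = m + 1 by omega]
    rw [hpoint, Nat.Ico_succ_singleton, prod_singleton, ← prod_range_succ]
    rfl
  | succ k ih =>
    have hr : 0 < r (m + 1) :=
      (by positivity : (0 : ℝ) ≤ ‖c m‖ * ‖w m‖).trans_lt (hfirst k.succ_pos)
    set K := ∏ j ∈ range m, (w (j + 1) - c j * w j)
    have hinner : Set.EqOn
        (fun z => iterCI r (chainIntegrand c f) (m + 1 + 1) k (update w (m + 1) z))
        (fun z => f (fun l => chainPoint c n (m + 1) (update w (m + 1) z) l) / K /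
          ((z - c m * w m) * (w n - (∏ j ∈ Ico (m + 1) n, c j) * z)))
        (sphere 0 (r (m + 1))) := by
      intro z hz
      have hn : n ≠ m + 1 := by omega
      rw [mem_sphere_zero_iff_norm] at hz
      simp only
      rw [ih (m + 1) (update w (m + 1) z) (by omega)
        (fun _ => by rw [update_self, hz]; exact hin (m + 1) (by omega) (by omega))
        (fun l hl => hin l (by omega))
        (fun l hl => by rw [update_of_ne hn]; exact hout l (by omega)),
        prod_range_succ, update_self, update_of_ne hn, update_of_ne (by omega : m ≠ m + 1)]
      have hK : ∏ j ∈ range m, (update w (m + 1) z (j + 1) - c j * update w (m + 1) z j) = K :=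
        prod_congr rfl fun j hj => by
          rw [update_of_ne (by simp at hj; omega), update_of_ne (by simp at hj; omega)]
      rw [hK, div_div, mul_assoc]
    have hg : Differentiable ℂ
        fun z => f (fun l => chainPoint c n (m + 1) (update w (m + 1) z) l) / K :=
      (hf.comp (differentiable_pi.mpr fun l =>
        differentiable_chainPoint_update c n (m + 1) w l)).div_const K
    rw [iterCI, circleIntegral.integral_congr hr.le hinner,
      circleIntegral_div_sub_mul_sub hg ?_ ?_]
    · rw [chainPoint_update_succ c w (by omega), prod_eq_prod_Ico_succ_bot (by omega : m < n),
        div_div, mul_assoc, mul_left_comm (∏ j ∈ Ico (m + 1) n, c j)]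
    · simpa only [norm_mul] using hfirst k.succ_pos
    · exact hout (m + 1) (by omega) (by omega)

end chain

lemma prod_range_ite_inv_eq_zpow (M : ℕ) {q : ℂ} (hq : q ≠ 0) (l : ℕ) :
    ∏ j ∈ range l, (if j < M then q⁻¹ else q) =
      if l ≤ M then q ^ (-(l : ℤ)) else q ^ ((l : ℤ) - 2 * M) := by
  induction l with
  | zero => simp
  | succ l ih =>
    rw [prod_range_succ, ih]
    by_cases hlM : l < M
    · simp only [hlM, hlM.le, Nat.succ_le_of_lt hlM, if_true]
      rw [← zpow_neg_one, ← zpow_add₀ hq]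
      congr 1
      push_cast
      ring
    · rw [if_neg hlM, if_neg (by omega : ¬ l + 1 ≤ M)]
      split_ifs <;> rw [← zpow_add_one₀ hq] <;> congr 1 <;> push_cast <;> omega

theorem proposition8_general (M N : ℕ) (hM : 1 ≤ M) (hN : 1 ≤ N)
    (q : ℂ) (hq0 : 0 < ‖q‖)
    (f : (Fin (M + N + 1) → ℂ) → ℂ) (hf : ∀ x, AnalyticAt ℂ f x)
    (w : ℕ → ℂ) (r : ℕ → ℝ)
    (h1 : ‖w 0‖ < ‖q‖ * r 1)
    (h2 : ∀ j, 1 ≤ j → j ≤ M - 1 → r j < ‖q‖ * r (j + 1))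
    (h3 : ∀ j, M ≤ j → j ≤ M + N - 2 → ‖q‖ * r j < r (j + 1))
    (h4 : ‖q‖ * r (M + N - 1) < ‖w (M + N)‖) :
    iterCI r
        (fun u =>
          f (fun i => u (i : ℕ)) /
            ((∏ j ∈ Finset.range M, (u (j + 1) - q⁻¹ * u j)) *
              ∏ j ∈ Finset.Ico M (M + N), (u (j + 1) - q * u j)))
        1 (M + N - 1) w =
      f (fun i =>
          if (i : ℕ) = M + N then w (M + N)
          else if (i : ℕ) ≤ M then q ^ (-((i : ℕ) : ℤ)) * w 0
          else q ^ (((i : ℕ) : ℤ) - 2 * M) * w 0) /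
        (w (M + N) - q ^ ((N : ℤ) - M) * w 0) := by
  have hq : q ≠ 0 := norm_pos_iff.mp hq0
  set c : ℕ → ℂ := fun j => if j < M then q⁻¹ else q
  have hF : (fun u : ℕ → ℂ => f (fun i => u (i : ℕ)) /
      ((∏ j ∈ range M, (u (j + 1) - q⁻¹ * u j)) * ∏ j ∈ Ico M (M + N), (u (j + 1) - q * u j))) =
      chainIntegrand c f := by
    funext u
    rw [chainIntegrand, ← prod_range_mul_prod_Ico _ (Nat.le_add_right M N)]
    congr 2 <;> refine prod_congr rfl fun j hj => ?_ <;> simp at hj <;> simp [c, hj]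
  have hfirst : ‖c 0‖ * ‖w 0‖ < r 1 := by
    simpa [c, show 0 < M by omega, inv_mul_lt_iff₀ hq0] using h1
  have hin : ∀ l, 0 < l → l + 1 < M + N → ‖c l‖ * r l < r (l + 1) := fun l hl hlt => by
    by_cases hlM : l < M
    · simpa [c, hlM, inv_mul_lt_iff₀ hq0] using h2 l hl (by omega)
    · simpa [c, hlM] using h3 l (by omega) (by omega)
  have hlast : ‖c (M + N - 1)‖ * r (M + N - 1) < ‖w (M + N)‖ := by
    simpa only [c, if_neg (show ¬ M + N - 1 < M by omega)] using h4
  rw [hF, iterCI_chainIntegrand (fun x => (hf x).differentiableAt) (M + N - 1) 0 w (by omega)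
    (fun _ => hfirst) hin (norm_prod_Ico_mul_lt hin hlast)]
  simp only [range_zero, prod_empty, one_mul, ← range_eq_Ico, c,
    prod_range_ite_inv_eq_zpow M hq, if_neg (show ¬ M + N ≤ M by omega)]
  congr 3
  · funext i
    simp only [chainPoint, ← range_eq_Ico, prod_range_ite_inv_eq_zpow M hq]
    split_ifs <;> simp_all
  · congr 1
    push_cast
    ring

/-- Proposition 8: the iterated residue evaluation of the contour integral appearing
in the invertibility relations of the vertex operators. -/
theorem proposition8 (M N : ℕ) (hM : 1 ≤ M) (hN : 1 ≤ N)
    (q : ℂ) (hq0 : 0 < ‖q‖) (hq1 : ‖q‖ < 1)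
    (f : (Fin (M + N + 1) → ℂ) → ℂ) (hf : ∀ x, AnalyticAt ℂ f x)
    (w : ℕ → ℂ) (hw0 : w 0 ≠ 0) (r : ℕ → ℝ)
    (hr : ∀ j, 1 ≤ j → j ≤ M + N - 1 → 0 < r j)
    (h1 : ‖w 0‖ < ‖q‖ * r 1)
    (h2 : ∀ j, 1 ≤ j → j ≤ M - 1 → r j < ‖q‖ * r (j + 1))
    (h3 : ∀ j, M ≤ j → j ≤ M + N - 2 → ‖q‖ * r j < r (j + 1))
    (h4 : ‖q‖ * r (M + N - 1) < ‖w (M + N)‖) :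
    iterCI r
        (fun u =>
          f (fun i => u (i : ℕ)) /
            ((∏ j ∈ Finset.range M, (u (j + 1) - q⁻¹ * u j)) *
              ∏ j ∈ Finset.Ico M (M + N), (u (j + 1) - q * u j)))
        1 (M + N - 1) w =
      f (fun i =>
          if (i : ℕ) = M + N then w (M + N)
          else if (i : ℕ) ≤ M then q ^ (-((i : ℕ) : ℤ)) * w 0
          else q ^ (((i : ℕ) : ℤ) - 2 * M) * w 0) /
        (w (M + N) - q ^ ((N : ℤ) - M) * w 0) :=
  proposition8_general M N hM hN q hq0 f hf w r h1 h2 h3 h4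
end

section
/- Vanishing of the coefficient function F_μ. Let M, N be positive integers with M ≠ N, let q be a nonzero complex number with q² ≠ 1, let w₀, w₁, …, w_{M+N} be complex numbers with w₀ ≠ 0, set u = q^{N−M} w_{M+N}/w₀, and assume q²u ≠ 1. Then: (i) for every integer μ with 1 ≤ μ ≤ M, F_μ := c_μ c*_μ (−1)^{μ−1} [ b(u)(w_{μ−1} − q w_μ) − (q w_{μ−1} − w_μ) ] − u c(u) Σ_{ν=1}^{μ−1} c_ν c*_ν (−1)^{ν−1} (q w_{ν−1} − w_ν) − c(u) [ Σ_{ν=μ+1}^{M} c_ν c*_ν (−1)^{ν−1} (q w_{ν−1} − w_ν) + Σ_{ν=M+1}^{M+N} c_ν c*_ν (−1)^{ν} (w_{ν−1} − q w_ν) ] = 0; and (ii) for every integer μ with M+1 ≤ μ ≤ M+N, F_μ := (−1)^{μ} c_μ c*_μ [ b(u)(q w_{μ−1} − w_μ) + a(u)(w_{μ−1} − q w_μ) ] + u c(u) [ Σ_{ν=1}^{M} c_ν c*_ν (−1)^{ν−1} (q w_{ν−1} − w_ν) − Σ_{ν=M+1}^{μ−1} c_ν c*_ν (−1)^{ν−1}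 (w_{ν−1} − q w_ν) ] − c(u) Σ_{ν=μ+1}^{M+N} c_ν c*_ν (−1)^{ν−1} (w_{ν−1} − q w_ν) = 0. -/
/-- `a(z) = (z−q²)/(1−q²z)`. -/
noncomputable def aR (q z : ℂ) : ℂ := (z - q ^ 2) / (1 - q ^ 2 * z)

/-- `b(z) = q(1−z)/(1−q²z)`. -/
noncomputable def bR (q z : ℂ) : ℂ := q * (1 - z) / (1 - q ^ 2 * z)

/-- `c(z) = (1−q²)/(1−q²z)`. -/
noncomputable def cR (q z : ℂ) : ℂ := (1 - q ^ 2) / (1 - q ^ 2 * z)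

/-- The constants `c_μ`. -/
noncomputable def cConst (M N : ℕ) (q : ℂ) (μ : ℕ) : ℂ :=
  if μ ≤ M then (-1 : ℂ) ^ (M + N - μ - 1) * q ^ (M - μ) * (q - q⁻¹) ^ (M + N - μ)
  else (-1 : ℂ) ^ (M + N - μ) * (q - q⁻¹) ^ (M + N - μ)

/-- The constants `c*_μ`. -/
noncomputable def cStar (M N : ℕ) (q : ℂ) (μ : ℕ) : ℂ :=
  if μ ≤ M then (q - q⁻¹) ^ (μ - 1) else (q - q⁻¹) ^ (μ - 1) * q ^ (μ - M - 1)

/-- The argument `u = q^{N−M} w_{M+N} / w₀`. -/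
noncomputable def uArg (M N : ℕ) (q : ℂ) (w : ℕ → ℂ) : ℂ :=
  q ^ ((N : ℤ) - M) * w (M + N) / w 0

private lemma tele (g : ℕ → ℂ) (a b : ℕ) (hab : a ≤ b) :
    ∑ ν ∈ Finset.Ico a b, (g ν - g (ν + 1)) = g a - g b := by
  induction b, hab using Nat.le_induction with
  | base => simp
  | succ n hn ih => rw [Finset.sum_Ico_succ_top hn, ih]; ring

private lemma ccA (M N : ℕ) (q : ℂ) (ν : ℕ) (h1 : 1 ≤ ν) (h2 : ν ≤ M) (hN : 1 ≤ N) :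
    cConst M N q ν * cStar M N q ν * (-1 : ℂ) ^ (ν - 1) =
      (-1 : ℂ) ^ (M + N) * (q - q⁻¹) ^ (M + N - 1) * q ^ (M - ν) := by
  rw [cConst, cStar, if_pos h2, if_pos h2]
  have e1 : (-1 : ℂ) ^ (M + N) = (-1 : ℂ) ^ (M + N - ν - 1) * (-1 : ℂ) ^ (ν - 1) := by
    have h : (-1 : ℂ) ^ (M + N) = (-1 : ℂ) ^ ((M + N - ν - 1) + (ν - 1) + 2) := by
      congr 1; omega
    rw [h, pow_add, pow_add]; norm_num
  have e2 : (q - q⁻¹) ^ (M + N - 1) = (q - q⁻¹) ^ (M + N - ν) * (q - q⁻¹) ^ (ν - 1) := by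
    rw [← pow_add]; congr 1; omega
  rw [e1, e2]; ring

private lemma ccB (M N : ℕ) (q : ℂ) (ν : ℕ) (h1 : M + 1 ≤ ν) (h2 : ν ≤ M + N) :
    cConst M N q ν * cStar M N q ν * (-1 : ℂ) ^ (ν - 1) =
      -((-1 : ℂ) ^ (M + N) * (q - q⁻¹) ^ (M + N - 1)) * q ^ (ν - M - 1) := by
  have hν : ¬ ν ≤ M := by omega
  rw [cConst, cStar, if_neg hν, if_neg hν]
  have e1 : (-1 : ℂ) ^ (M + N) = -((-1 : ℂ) ^ (M + N - ν) * (-1 : ℂ) ^ (ν - 1)) := by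
    have h : (-1 : ℂ) ^ (M + N) = (-1 : ℂ) ^ ((M + N - ν) + (ν - 1) + 1) := by
      congr 1; omega
    rw [h, pow_add, pow_add]; ring
  have e2 : (q - q⁻¹) ^ (M + N - 1) = (q - q⁻¹) ^ (M + N - ν) * (q - q⁻¹) ^ (ν - 1) := by
    rw [← pow_add]; congr 1; omega
  rw [e1, e2]; ring

private lemma ccB' (M N : ℕ) (q : ℂ) (ν : ℕ) (h1 : M + 1 ≤ ν) (h2 : ν ≤ M + N) :
    cConst M N q ν * cStar M N q ν * (-1 : ℂ) ^ ν =
      (-1 : ℂ) ^ (M + N) * (q - q⁻¹) ^ (M + N - 1) * q ^ (ν - M - 1) := by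
  have e : (-1 : ℂ) ^ ν = -(-1 : ℂ) ^ (ν - 1) := by
    have h : (-1 : ℂ) ^ ν = (-1 : ℂ) ^ ((ν - 1) + 1) := by congr 1; omega
    rw [h, pow_succ]; ring
  rw [e]
  have h := ccB M N q ν h1 h2
  linear_combination -h

/-- Vanishing of the coefficient functions `F_μ` in both regimes. -/
theorem Fmu_vanishes (M N : ℕ) (hM : 1 ≤ M) (hN : 1 ≤ N) (hMN : M ≠ N)
    (q : ℂ) (hq : q ≠ 0) (hq2 : q ^ 2 ≠ 1)
    (w : ℕ → ℂ) (hw0 : w 0 ≠ 0) (hu : q ^ 2 * uArg M N q w ≠ 1) :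
    (∀ μ : ℕ, 1 ≤ μ → μ ≤ M →
      cConst M N q μ * cStar M N q μ * (-1 : ℂ) ^ (μ - 1) *
          (bR q (uArg M N q w) * (w (μ - 1) - q * w μ) - (q * w (μ - 1) - w μ)) -
        uArg M N q w * cR q (uArg M N q w) *
          ∑ ν ∈ Finset.Ico 1 μ,
            cConst M N q ν * cStar M N q ν * (-1 : ℂ) ^ (ν - 1) * (q * w (ν - 1) - w ν) -
        cR q (uArg M N q w) *
          ((∑ ν ∈ Finset.Icc (μ + 1) M,
              cConst M N q ν * cStar M N q ν * (-1 : ℂ) ^ (ν - 1) *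
                (q * w (ν - 1) - w ν)) +
            ∑ ν ∈ Finset.Icc (M + 1) (M + N),
              cConst M N q ν * cStar M N q ν * (-1 : ℂ) ^ ν *
                (w (ν - 1) - q * w ν)) = 0) ∧
    (∀ μ : ℕ, M + 1 ≤ μ → μ ≤ M + N →
      (-1 : ℂ) ^ μ * cConst M N q μ * cStar M N q μ *
          (bR q (uArg M N q w) * (q * w (μ - 1) - w μ) +
            aR q (uArg M N q w) * (w (μ - 1) - q * w μ)) +
        uArg M N q w * cR q (uArg M N q w) *
          ((∑ ν ∈ Finset.Icc 1 M,
              cConst M N q ν * cStar M N q ν * (-1 : ℂ) ^ (ν - 1) *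
                (q * w (ν - 1) - w ν)) -
            ∑ ν ∈ Finset.Icc (M + 1) (μ - 1),
              cConst M N q ν * cStar M N q ν * (-1 : ℂ) ^ (ν - 1) *
                (w (ν - 1) - q * w ν)) -
        cR q (uArg M N q w) *
          ∑ ν ∈ Finset.Icc (μ + 1) (M + N),
            cConst M N q ν * cStar M N q ν * (-1 : ℂ) ^ (ν - 1) *
              (w (ν - 1) - q * w ν) = 0) := by
  set u := uArg M N q w with hu_def
  set K : ℂ := (-1 : ℂ) ^ (M + N) * (q - q⁻¹) ^ (M + N - 1) with hK_def
  have hD : (1 : ℂ) - q ^ 2 * u ≠ 0 := sub_ne_zero.mpr fun h => hu h.symm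
  have hrel : q ^ N * w (M + N) = q ^ M * (u * w 0) := by
    rw [hu_def]
    simp only [uArg, zpow_sub₀ hq, zpow_natCast]
    field_simp
  clear_value u K
  constructor
  · intro μ hμ1 hμM
    -- first sum
    have S1 : (∑ ν ∈ Finset.Ico 1 μ,
        cConst M N q ν * cStar M N q ν * (-1 : ℂ) ^ (ν - 1) * (q * w (ν - 1) - w ν))
        = K * (q ^ M * w 0) - K * (q ^ (M + 1 - μ) * w (μ - 1)) := by
      have step : ∀ ν ∈ Finset.Ico 1 μ,
          cConst M N q ν * cStar M N q ν * (-1 : ℂ) ^ (ν - 1) * (q * w (ν - 1) - w ν)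
            = (fun ν => K * (q ^ (M + 1 - ν) * w (ν - 1))) ν
              - (fun ν => K * (q ^ (M + 1 - ν) * w (ν - 1))) (ν + 1) := by
        intro ν hν
        simp only [Finset.mem_Ico] at hν
        rw [ccA M N q ν hν.1 (by omega) hN]
        have p1 : q ^ (M + 1 - ν) = q * q ^ (M - ν) := by
          rw [← pow_succ']; congr 1; omega
        have p2 : M + 1 - (ν + 1) = M - ν := by omega
        simp only [p1, p2, Nat.add_sub_cancel]
        rw [hK_def]; ring
      rw [Finset.sum_congr rfl step, tele _ 1 μ hμ1]
      norm_num
    have S2 : (∑ ν ∈ Finset.Icc (μ + 1) M,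
        cConst M N q ν * cStar M N q ν * (-1 : ℂ) ^ (ν - 1) * (q * w (ν - 1) - w ν))
        = K * (q ^ (M - μ) * w μ) - K * w M := by
      rw [← Finset.Ico_add_one_right_eq_Icc]
      have step : ∀ ν ∈ Finset.Ico (μ + 1) (M + 1),
          cConst M N q ν * cStar M N q ν * (-1 : ℂ) ^ (ν - 1) * (q * w (ν - 1) - w ν)
            = (fun ν => K * (q ^ (M + 1 - ν) * w (ν - 1))) ν
              - (fun ν => K * (q ^ (M + 1 - ν) * w (ν - 1))) (ν + 1) := by
        intro ν hν
        simp only [Finset.mem_Ico] at hν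
        rw [ccA M N q ν (by omega) (by omega) hN]
        have p1 : q ^ (M + 1 - ν) = q * q ^ (M - ν) := by
          rw [← pow_succ']; congr 1; omega
        have p2 : M + 1 - (ν + 1) = M - ν := by omega
        simp only [p1, p2, Nat.add_sub_cancel]
        rw [hK_def]; ring
      rw [Finset.sum_congr rfl step, tele _ (μ + 1) (M + 1) (by omega)]
      have p3 : M + 1 - (μ + 1) = M - μ := by omega
      have p4 : M + 1 - (M + 1) = 0 := by omega
      simp only [p3, p4, Nat.add_sub_cancel, pow_zero, one_mul]
    have S3 : (∑ ν ∈ Finset.Icc (M + 1) (M + N),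
        cConst M N q ν * cStar M N q ν * (-1 : ℂ) ^ ν * (w (ν - 1) - q * w ν))
        = K * w M - K * (q ^ N * w (M + N)) := by
      rw [← Finset.Ico_add_one_right_eq_Icc]
      have step : ∀ ν ∈ Finset.Ico (M + 1) (M + N + 1),
          cConst M N q ν * cStar M N q ν * (-1 : ℂ) ^ ν * (w (ν - 1) - q * w ν)
            = (fun ν => K * (q ^ (ν - M - 1) * w (ν - 1))) ν
              - (fun ν => K * (q ^ (ν - M - 1) * w (ν - 1))) (ν + 1) := by
        intro ν hν
        simp only [Finset.mem_Ico] at hν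
        rw [ccB' M N q ν (by omega) (by omega)]
        have p1 : q ^ (ν + 1 - M - 1) = q ^ (ν - M - 1) * q := by
          rw [← pow_succ]; congr 1; omega
        simp only [p1, Nat.add_sub_cancel]
        rw [hK_def]; ring
      rw [Finset.sum_congr rfl step, tele _ (M + 1) (M + N + 1) (by omega)]
      have p3 : M + 1 - M - 1 = 0 := by omega
      have p4 : M + N + 1 - M - 1 = N := by omega
      simp only [p3, p4, Nat.add_sub_cancel, pow_zero, one_mul]
    rw [S1, S2, S3, ccA M N q μ hμ1 hμM hN, ← hK_def, hrel]
    have p5 : q ^ (M + 1 - μ) = q * q ^ (M - μ) := by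
      rw [← pow_succ']; congr 1; omega
    rw [p5]
    simp only [bR, cR]
    field_simp
    ring
  · intro μ hμ1 hμMN
    have T1 : (∑ ν ∈ Finset.Icc 1 M,
        cConst M N q ν * cStar M N q ν * (-1 : ℂ) ^ (ν - 1) * (q * w (ν - 1) - w ν))
        = K * (q ^ M * w 0) - K * w M := by
      rw [← Finset.Ico_add_one_right_eq_Icc]
      have step : ∀ ν ∈ Finset.Ico 1 (M + 1),
          cConst M N q ν * cStar M N q ν * (-1 : ℂ) ^ (ν - 1) * (q * w (ν - 1) - w ν)
            = (fun ν => K * (q ^ (M + 1 - ν) * w (ν - 1))) ν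
              - (fun ν => K * (q ^ (M + 1 - ν) * w (ν - 1))) (ν + 1) := by
        intro ν hν
        simp only [Finset.mem_Ico] at hν
        rw [ccA M N q ν hν.1 (by omega) hN]
        have p1 : q ^ (M + 1 - ν) = q * q ^ (M - ν) := by
          rw [← pow_succ']; congr 1; omega
        have p2 : M + 1 - (ν + 1) = M - ν := by omega
        simp only [p1, p2, Nat.add_sub_cancel]
        rw [hK_def]; ring
      rw [Finset.sum_congr rfl step, tele _ 1 (M + 1) (by omega)]
      have p4 : M + 1 - (M + 1) = 0 := by omega
      simp only [p4, Nat.add_sub_cancel, pow_zero, one_mul]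
    have T2 : (∑ ν ∈ Finset.Icc (M + 1) (μ - 1),
        cConst M N q ν * cStar M N q ν * (-1 : ℂ) ^ (ν - 1) * (w (ν - 1) - q * w ν))
        = (-(K * w M)) - (-(K * (q ^ (μ - M - 1) * w (μ - 1)))) := by
      have hIcc : Finset.Icc (M + 1) (μ - 1) = Finset.Ico (M + 1) μ := by
        rw [← Finset.Ico_add_one_right_eq_Icc]
        congr 1
        omega
      rw [hIcc]
      have step : ∀ ν ∈ Finset.Ico (M + 1) μ,
          cConst M N q ν * cStar M N q ν * (-1 : ℂ) ^ (ν - 1) * (w (ν - 1) - q * w ν)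
            = (fun ν => -(K * (q ^ (ν - M - 1) * w (ν - 1)))) ν
              - (fun ν => -(K * (q ^ (ν - M - 1) * w (ν - 1)))) (ν + 1) := by
        intro ν hν
        simp only [Finset.mem_Ico] at hν
        rw [ccB M N q ν hν.1 (by omega)]
        have p1 : q ^ (ν + 1 - M - 1) = q ^ (ν - M - 1) * q := by
          rw [← pow_succ]; congr 1; omega
        simp only [p1, Nat.add_sub_cancel]
        rw [hK_def]; ring
      rw [Finset.sum_congr rfl step, tele _ (M + 1) μ hμ1]
      have p3 : M + 1 - M - 1 = 0 := by omega
      simp only [p3, Nat.add_sub_cancel, pow_zero, one_mul]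
    have T3 : (∑ ν ∈ Finset.Icc (μ + 1) (M + N),
        cConst M N q ν * cStar M N q ν * (-1 : ℂ) ^ (ν - 1) * (w (ν - 1) - q * w ν))
        = (-(K * (q ^ (μ - M) * w μ))) - (-(K * (q ^ N * w (M + N)))) := by
      rw [← Finset.Ico_add_one_right_eq_Icc]
      have step : ∀ ν ∈ Finset.Ico (μ + 1) (M + N + 1),
          cConst M N q ν * cStar M N q ν * (-1 : ℂ) ^ (ν - 1) * (w (ν - 1) - q * w ν)
            = (fun ν => -(K * (q ^ (ν - M - 1) * w (ν - 1)))) ν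
              - (fun ν => -(K * (q ^ (ν - M - 1) * w (ν - 1)))) (ν + 1) := by
        intro ν hν
        simp only [Finset.mem_Ico] at hν
        rw [ccB M N q ν (by omega) (by omega)]
        have p1 : q ^ (ν + 1 - M - 1) = q ^ (ν - M - 1) * q := by
          rw [← pow_succ]; congr 1; omega
        simp only [p1, Nat.add_sub_cancel]
        rw [hK_def]; ring
      rw [Finset.sum_congr rfl step, tele _ (μ + 1) (M + N + 1) (by omega)]
      have p3 : μ + 1 - M - 1 = μ - M := by omega
      have p4 : M + N + 1 - M - 1 = N := by omega
      simp only [p3, p4, Nat.add_sub_cancel]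
    have hcoef : (-1 : ℂ) ^ μ * cConst M N q μ * cStar M N q μ = K * q ^ (μ - M - 1) := by
      have h := ccB' M N q μ hμ1 hμMN
      rw [hK_def]; linear_combination h
    rw [T1, T2, T3, hcoef, hrel]
    have p5 : q ^ (μ - M) = q * q ^ (μ - M - 1) := by
      rw [← pow_succ']; congr 1; omega
    rw [p5]
    simp only [aR, bR, cR]
    field_simp
    ring
end
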